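/- For any ultraimaginary a_E and any cardinal λ, the set bddᵘ_λ(a_E) of ultraimaginaries of arity at most λ bounded over a_E has cardinality at most 2^{|a| + 2^{λ+|T|}}. -/

import Mathlib

/-!
Fix a small model `N ⊇ a` with `|N| ≤ |a| + |T|`. A bounded `b_F` is determined by `tp(b/N)`:
if `b ≡_N b'`, take a Morley sequence `c₀, c₁, …` over `N b b'` in a coheir of `tp(b/N)`. Both
`b, c₀, c₁, …` and `b', c₀, c₁, …` have constant pair types over `N`, and if consecutive terms of
such a sequence were `F`-inequivalent, compactness would stretch it beyond the number of conjugates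
of `b_F` over `a_E`, every term being the image of `b` under an automorphism fixing `N`. Hence
`b_F` is coded by its arity `s ⊆ K`, the set of types of `F`-related pairs and `tp(b/N)`, and
there are at most `2^λ · 2^(2^(λ+|T|)) · 2^(|a| + 2^(λ+|T|))` codes.
-/

open FirstOrder Cardinal

universe u v w

namespace BddUltra

variable (L : FirstOrder.Language.{u, u}) (M : Type u) [L.Structure M]

/-- The automorphism group of `M` (composition as multiplication). -/
instance : Group (M ≃[L] M) where
  mul f g := f.comp g
  one := Language.Equiv.refl L M
  inv := Language.Equiv.symm
  mul_assoc f g h := by ext x; rfl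
  one_mul f := by ext x; rfl
  mul_one f := by ext x; rfl
  inv_mul_cancel f := by ext x; exact f.toEquiv.symm_apply_apply x

/-- The cardinality `|T|` of the theory: the cardinality of the language plus `ℵ₀`. -/
def cardT : Cardinal.{u} := L.card + ℵ₀

/-- Two tuples realize the same complete type over `∅`. -/
def SameType {α : Type v} (a b : α → M) : Prop :=
  ∀ φ : L.Formula α, φ.Realize a ↔ φ.Realize b

/-- Two tuples realize the same complete type over the set `A ⊆ M` of parameters. -/
def SameTypeOver (A : Set M) {α : Type v} (a b : α → M) : Prop :=
  ∀ φ : L.Formula (↥A ⊕ α),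
    φ.Realize (Sum.elim (Subtype.val : ↥A → M) a) ↔
      φ.Realize (Sum.elim (Subtype.val : ↥A → M) b)

theorem SameType.comp {α : Type v} {γ : Type w} {a b : α → M} (h : SameType L M a b)
    (g : γ → α) : SameType L M (a ∘ g) (b ∘ g) := by
  intro φ
  have := h (φ.relabel g)
  rwa [Language.Formula.realize_relabel, Language.Formula.realize_relabel] at this

/-- An invariant equivalence relation of arity `α` on `α`-tuples from `M`. -/
structure IER (α : Type u) : Type u where
  rel : (α → M) → (α → M) → Prop
  equiv : Equivalence rel
  invariant : ∀ a b c d : α → M,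
    SameType L M (Sum.elim a b) (Sum.elim c d) → (rel a b ↔ rel c d)

def IER.setoid {α : Type u} (E : IER L M α) : Setoid (α → M) := ⟨E.rel, E.equiv⟩

/-- The pair (juxtaposition) of two invariant equivalence relations. -/
def IER.prod {α β : Type u} (E : IER L M α) (F : IER L M β) : IER L M (α ⊕ β) where
  rel x y := E.rel (x ∘ Sum.inl) (y ∘ Sum.inl) ∧ F.rel (x ∘ Sum.inr) (y ∘ Sum.inr)
  equiv := ⟨fun _ => ⟨E.equiv.refl _, F.equiv.refl _⟩,
    fun h => ⟨E.equiv.symm h.1, F.equiv.symm h.2⟩,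
    fun h h' => ⟨E.equiv.trans h.1 h'.1, F.equiv.trans h.2 h'.2⟩⟩
  invariant := by
    intro a b c d h
    have e1 : ∀ (x : α ⊕ β → M) (y : α ⊕ β → M),
        (Sum.elim x y) ∘ (Sum.map Sum.inl Sum.inl : α ⊕ α → (α ⊕ β) ⊕ (α ⊕ β))
          = Sum.elim (x ∘ Sum.inl) (y ∘ Sum.inl) := by
      intro x y; funext i; cases i <;> rfl
    have e2 : ∀ (x : α ⊕ β → M) (y : α ⊕ β → M),
        (Sum.elim x y) ∘ (Sum.map Sum.inr Sum.inr : β ⊕ β → (α ⊕ β) ⊕ (α ⊕ β))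
          = Sum.elim (x ∘ Sum.inr) (y ∘ Sum.inr) := by
      intro x y; funext i; cases i <;> rfl
    have h1 := h.comp (L := L) (M := M) (Sum.map Sum.inl Sum.inl)
    have h2 := h.comp (L := L) (M := M) (Sum.map Sum.inr Sum.inr)
    rw [e1, e1] at h1
    rw [e2, e2] at h2
    exact and_congr (E.invariant _ _ _ _ h1) (F.invariant _ _ _ _ h2)

/-- The set of automorphisms fixing the ultraimaginary `a_E`. -/
def autU {α : Type u} (E : IER L M α) (a : α → M) : Set (M ≃[L] M) :=
  {σ | E.rel a (⇑σ ∘ a)}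

/-- The set of automorphisms fixing the set `A` pointwise. -/
def autSet (A : Set M) : Set (M ≃[L] M) := {σ | ∀ x ∈ A, σ x = x}

/-- The set of automorphisms fixing the set `A` and the tuple `u` pointwise. -/
def autSetTup (A : Set M) {γ : Type v} (u : γ → M) : Set (M ≃[L] M) :=
  {σ | (∀ x ∈ A, σ x = x) ∧ ∀ i, σ (u i) = u i}

/-- The ultraimaginary `b_F` is bounded over a parameter set whose pointwise
stabilizer is `X`: the `X`-orbit of `b` meets fewer than `κ` classes of `F`. -/
def BddU (κ : Cardinal.{u}) (X : Set (M ≃[L] M)) {β : Type u} (F : IER L M β)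
    (b : β → M) : Prop :=
  ∃ S : Set (β → M), #S < κ ∧ ∀ σ ∈ X, ∃ s ∈ S, F.rel (⇑σ ∘ b) s

/-- The cardinality of the orbit of the ultraimaginary `b_F` under the set `X`
of automorphisms. -/
def orbitCard (X : Set (M ≃[L] M)) {β : Type u} (F : IER L M β) (b : β → M) :
    Cardinal.{u} :=
  #(Set.range fun σ : X => Quotient.mk F.setoid (⇑σ.1 ∘ b))

/-- `b ⫝ᵇᵘ_A c`, expressed in terms of the pointwise stabilizers `XA`, `XAb`, `XAc` of
`A`, `Ab` and `Ac`: an ultraimaginary is bounded over `Ab` and over `Ac` iff it is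
bounded over `A`. -/
def IndepBU (κ : Cardinal.{u}) (XA XAb XAc : Set (M ≃[L] M)) : Prop :=
  ∀ (δ : Type u) (H : IER L M δ) (d : δ → M),
    (BddU L M κ XAb H d ∧ BddU L M κ XAc H d) ↔ BddU L M κ XA H d

/-- The set of automorphisms fixing an elementary substructure pointwise. -/
def autES (N : L.ElementarySubstructure M) : Set (M ≃[L] M) :=
  autSet L M (N : Set M)

/-- `Autf(𝕄/x)` where `X = Aut(𝕄/x)`: the subgroup generated by all pointwise
stabilizers of small models that are contained in `X`. -/
def autfGen (κ : Cardinal.{u}) (X : Set (M ≃[L] M)) : Subgroup (M ≃[L] M) :=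
  Subgroup.closure {σ | ∃ N : L.ElementarySubstructure M,
    #(N : Set M) < κ ∧ autES L M N ⊆ X ∧ σ ∈ autES L M N}

/-- The group of Lascar strong automorphisms over the set `A ⊆ M`: generated by the
pointwise stabilizers of small models containing `A`. -/
def lascarGrp (κ : Cardinal.{u}) (A : Set M) : Subgroup (M ≃[L] M) :=
  Subgroup.closure {σ | ∃ N : L.ElementarySubstructure M,
    #(N : Set M) < κ ∧ A ⊆ (N : Set M) ∧ σ ∈ autES L M N}

/-- κ-saturation: every finitely realizable set of formulas over a parameter tuple of
arity `< κ`, in `< κ` many variables, is realized. -/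
def Saturated (κ : Cardinal.{u}) : Prop :=
  ∀ (α β : Type u), #α < κ → #β < κ → ∀ (a : α → M) (p : Set (L.Formula (α ⊕ β))),
    (∀ s : Finset (L.Formula (α ⊕ β)), ↑s ⊆ p →
      ∃ b : β → M, ∀ φ ∈ s, φ.Realize (Sum.elim a b)) →
    ∃ b : β → M, ∀ φ ∈ p, φ.Realize (Sum.elim a b)

/-- Strong κ-homogeneity: tuples of arity `< κ` with the same type over `∅` are
conjugate under an automorphism. -/
def Homog (κ : Cardinal.{u}) : Prop :=
  ∀ (α : Type u) (a b : α → M), #α < κ → SameType L M a b →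
    ∃ σ : M ≃[L] M, ∀ i, σ (a i) = b i

/-- `M` is a monster model with bound `κbar`: `κbar` is a sufficiently large
(uncountable, regular, strong limit, above `|T|`) cardinal, and `M` is
`κbar`-saturated and strongly `κbar`-homogeneous. -/
structure Monster (κbar : Cardinal.{u}) : Prop where
  aleph0_lt : ℵ₀ < κbar
  isRegular : κbar.IsRegular
  strongLimit : ∀ ρ : Cardinal.{u}, ρ < κbar → 2 ^ ρ < κbar
  lang_lt : L.card < κbar
  saturated : Saturated L M κbar
  homog : Homog L M κbar

/-- A hyperimaginary: the class of a countable tuple under a countably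
type-definable (over `∅`) equivalence relation. -/
structure Hyp : Type u where
  rep : ℕ → M
  fmls : Set (L.Formula (ℕ ⊕ ℕ))
  countable : fmls.Countable
  equiv : Equivalence fun a b : ℕ → M => ∀ φ ∈ fmls, φ.Realize (Sum.elim a b)

/-- The automorphisms fixing each hyperimaginary in the set `A`. -/
def autHyp (A : Set (Hyp L M)) : Set (M ≃[L] M) :=
  {σ | ∀ h ∈ A, ∀ φ ∈ h.fmls, φ.Realize (Sum.elim h.rep (⇑σ ∘ h.rep))}

/-- The automorphisms fixing each hyperimaginary in `A` and the tuple `u` pointwise. -/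
def autHypTup (A : Set (Hyp L M)) {γ : Type v} (u : γ → M) : Set (M ≃[L] M) :=
  {σ | σ ∈ autHyp L M A ∧ ∀ i, σ (u i) = u i}

/-- Flattening of a finite subsequence of a sequence of tuples into a single tuple. -/
def flatten {ι : Type v} {β : Type w} (f : ι → β → M) {n : ℕ} (s : Fin n → ι) :
    Fin n × β → M := fun p => f (s p.1) p.2

/-- A sequence of tuples is `A`-indiscernible (`A ⊆ M` a set of real parameters). -/
def IndiscOver (A : Set M) {ι : Type v} [Preorder ι] {β : Type w} (f : ι → β → M) : Prop :=
  ∀ (n : ℕ) (s t : Fin n → ι), StrictMono s → StrictMono t →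
    SameTypeOver L M A (flatten M f s) (flatten M f t)

/-- Two sequences have the same Ehrenfeucht–Mostowski type over `A ⊆ M`. -/
def SameEMOver (A : Set M) {ι : Type v} [Preorder ι] {ι' : Type w} [Preorder ι']
    {β : Type u} (f : ι → β → M) (g : ι' → β → M) : Prop :=
  ∀ (n : ℕ) (s : Fin n → ι) (t : Fin n → ι'), StrictMono s → StrictMono t →
    SameTypeOver L M A (flatten M f s) (flatten M g t)

/-- A sequence of tuples is `A`-indiscernible, for `A` a set of hyperimaginaries:
any two increasing tuples from the sequence are conjugate under `Aut(𝕄/A)`. -/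
def IndiscOverHyp (A : Set (Hyp L M)) {ι : Type v} [Preorder ι] {β : Type w}
    (f : ι → β → M) : Prop :=
  ∀ (n : ℕ) (s t : Fin n → ι), StrictMono s → StrictMono t →
    ∃ σ ∈ autHyp L M A, ∀ (i : Fin n) (x : β), σ (f (s i) x) = f (t i) x

/-- Two sequences have the same EM-type over the set `A` of hyperimaginaries. -/
def SameEMOverHyp (A : Set (Hyp L M)) {ι : Type v} [Preorder ι] {ι' : Type w} [Preorder ι']
    {β : Type u} (f : ι → β → M) (g : ι' → β → M) : Prop :=
  ∀ (n : ℕ) (s : Fin n → ι) (t : Fin n → ι'), StrictMono s → StrictMono t →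
    ∃ σ ∈ autHyp L M A, ∀ (i : Fin n) (x : β), σ (f (s i) x) = g (t i) x

/-- A sequence of `β`-tuples from `N`, indexed by an arbitrary small linear order. -/
structure Seq (N : Type u) (β : Type u) : Type (u + 1) where
  idx : Type u
  [ord : LinearOrder idx]
  val : idx → β → N

attribute [instance] Seq.ord

/-- Concatenation `I + J` of sequences. -/
def Seq.concat {N β : Type u} (I J : Seq N β) : Seq N β where
  idx := I.idx ⊕ₗ J.idx
  val := fun x => Sum.elim I.val J.val (ofLex x)

/-- The sequence `I` flattened into a single tuple. -/
def Seq.flat {N β : Type u} (I : Seq N β) : I.idx × β → N := fun p => I.val p.1 p.2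

/-- The image `σ · I` of a sequence under an automorphism. -/
def Seq.map {β : Type u} (σ : M ≃[L] M) (I : Seq M β) : Seq M β where
  idx := I.idx
  ord := I.ord
  val := fun i x => σ (I.val i x)

/-- The sequence `(b_i)_{i < ω}` packaged as a `Seq`. -/
def Seq.ofNat {N β : Type u} (b : ℕ → β → N) : Seq N β where
  idx := ULift.{u} ℕ
  val := fun n => b n.down

/-- `I ∼_A J`: both sequences are infinite and `I + J` or `J + I` is `A`-indiscernible. -/
def SimSeq (A : Set M) {β : Type u} (I J : Seq M β) : Prop :=
  Infinite I.idx ∧ Infinite J.idx ∧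
    (IndiscOver L M A (I.concat J).val ∨ IndiscOver L M A (J.concat I).val)

/-- `I ≈_A J`: the transitive closure of `∼_A`. -/
def ApproxSeq (A : Set M) {β : Type u} : Seq M β → Seq M β → Prop :=
  Relation.TransGen (SimSeq L M A)

/-- `I ∼_A J` for `A` a set of hyperimaginaries. -/
def SimSeqHyp (A : Set (Hyp L M)) {β : Type u} (I J : Seq M β) : Prop :=
  Infinite I.idx ∧ Infinite J.idx ∧
    (IndiscOverHyp L M A (I.concat J).val ∨ IndiscOverHyp L M A (J.concat I).val)

/-- `I ≈_A J` for `A` a set of hyperimaginaries. -/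
def ApproxSeqHyp (A : Set (Hyp L M)) {β : Type u} : Seq M β → Seq M β → Prop :=
  Relation.TransGen (SimSeqHyp L M A)

/-- `u ⫝ᵇᵘ_A v` for tuples `u`, `v` over a set `A ⊆ M` of real parameters. -/
def IndepBUReal (κ : Cardinal.{u}) (A : Set M) {γ : Type v} {δ : Type w}
    (x : γ → M) (y : δ → M) : Prop :=
  IndepBU L M κ (autSet L M A) (autSetTup L M A x) (autSetTup L M A y)

/-- `u ⫝ᵇᵘ_A v` for tuples `u`, `v` over a set `A` of hyperimaginaries. -/
def IndepBUHyp (κ : Cardinal.{u}) (A : Set (Hyp L M)) {γ : Type v} {δ : Type w}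
    (x : γ → M) (y : δ → M) : Prop :=
  IndepBU L M κ (autHyp L M A) (autHypTup L M A x) (autHypTup L M A y)

/-- A total `⫝ᵇᵘ`-Morley sequence over the set `A ⊆ M`. -/
def TotalMorleyReal (κ : Cardinal.{u}) (A : Set M) {β : Type u} (b : ℕ → β → M) : Prop :=
  IndiscOver L M A b ∧
    ∀ I J : Seq M β, #I.idx < κ → #J.idx < κ →
      SameEMOver L M A ((I.concat J).val) b →
        IndepBUReal L M κ A I.flat J.flat

/-- A total `⫝ᵇᵘ`-Morley sequence over the set `A` of hyperimaginaries. -/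
def TotalMorleyHyp (κ : Cardinal.{u}) (A : Set (Hyp L M)) {β : Type u}
    (b : ℕ → β → M) : Prop :=
  IndiscOverHyp L M A b ∧
    ∀ I J : Seq M β, #I.idx < κ → #J.idx < κ →
      SameEMOverHyp L M A ((I.concat J).val) b →
        IndepBUHyp L M κ A I.flat J.flat

/-- `tp(b/Ac)` divides over `A`. -/
def Divides (A : Set M) {β : Type v} {γ : Type w} (b : β → M) (c : γ → M) : Prop :=
  ∃ ci : ℕ → γ → M, ci 0 = c ∧ IndiscOver L M A ci ∧
    ¬∃ b' : β → M, ∀ (i : ℕ) (φ : L.Formula (↥A ⊕ (β ⊕ γ))),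
      φ.Realize (Sum.elim (Subtype.val : ↥A → M) (Sum.elim b c)) →
        φ.Realize (Sum.elim (Subtype.val : ↥A → M) (Sum.elim b' (ci i)))

/-- The partition relation `λ → (β)^{<ω}_γ`. -/
def ArrowRel (lam : Cardinal.{u}) (ot : Ordinal.{u}) (c : Cardinal.{u}) : Prop :=
  ∀ f : Finset lam.ord.ToType → c.ord.ToType,
    ∃ X : Set lam.ord.ToType, Nonempty (↥X ≃o ot.ToType) ∧
      ∀ s t : Finset lam.ord.ToType, ↑s ⊆ X → ↑t ⊆ X → s.card = t.card → f s = f t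

/-- The Lascar strong automorphism group over a set `A` of hyperimaginaries:
generated by pointwise stabilizers of small models fixing every element of `A`. -/
def lascarHypGrp (κ : Cardinal.{u}) (A : Set (Hyp L M)) : Subgroup (M ≃[L] M) :=
  Subgroup.closure {σ | ∃ N : L.ElementarySubstructure M,
    #(N : Set M) < κ ∧ autES L M N ⊆ autHyp L M A ∧ σ ∈ autES L M N}

/-- `b_F ⫝ᵇᵘ_{a_E} c_G` for ultraimaginaries. -/
def IndepU (κ : Cardinal.{u}) {α β γ : Type u} (E : IER L M α) (a : α → M)
    (F : IER L M β) (b : β → M) (G : IER L M γ) (c : γ → M) : Prop :=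
  IndepBU L M κ (autU L M E a) (autU L M E a ∩ autU L M F b)
    (autU L M E a ∩ autU L M G c)

variable {M}

section FirstOrderFacts

variable {L}
open Language

theorem realize_iff_of_forall_realize_imp {γ : Type v} {x y : γ → M}
    (h : ∀ φ : L.Formula γ, φ.Realize x → φ.Realize y) (φ : L.Formula γ) :
    φ.Realize x ↔ φ.Realize y :=
  ⟨h φ, fun hy => by_contra fun hx => (h φ.not hx) hy⟩

theorem SameTypeOver.symm {A : Set M} {β : Type v} {x y : β → M}
    (h : SameTypeOver L M A x y) : SameTypeOver L M A y x :=
  fun φ => (h φ).symm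

theorem SameTypeOver.trans {A : Set M} {β : Type v} {x y z : β → M}
    (h : SameTypeOver L M A x y) (h' : SameTypeOver L M A y z) : SameTypeOver L M A x z :=
  fun φ => (h φ).trans (h' φ)

theorem SameTypeOver.comp {A : Set M} {β : Type v} {γ : Type w} {x y : β → M}
    (h : SameTypeOver L M A x y) (g : γ → β) : SameTypeOver L M A (x ∘ g) (y ∘ g) := by
  simpa [SameTypeOver, SameType, Sum.elim_comp_map] using
    SameType.comp L M (a := Sum.elim Subtype.val x) (b := Sum.elim Subtype.val y) h
      (Sum.map id g)

theorem SameTypeOver.sameType {A : Set M} {β : Type v} {x y : β → M}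
    (h : SameTypeOver L M A x y) : SameType L M x y :=
  SameType.comp L M (a := Sum.elim Subtype.val x) (b := Sum.elim Subtype.val y) h Sum.inr

theorem SameTypeOver.sumElim_val {A : Set M} {β : Type v} {x y : β → M}
    (h : SameTypeOver L M A x y) :
    SameTypeOver L M A (Sum.elim (Subtype.val : A → M) x) (Sum.elim Subtype.val y) := by
  simpa [SameTypeOver, SameType, Sum.comp_elim] using
    SameType.comp L M (a := Sum.elim Subtype.val x) (b := Sum.elim Subtype.val y) h
      (Sum.elim Sum.inl id)

theorem _root_.FirstOrder.Language.Formula.exists_finset_realize_iff {α β : Type*}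
    (φ : L.Formula (α ⊕ β)) :
    ∃ (s : Finset β) (ψ : L.Formula (α ⊕ s)), ∀ (v : α → M) (x : β → M),
      φ.Realize (Sum.elim v x) ↔ ψ.Realize (Sum.elim v (x ∘ Subtype.val)) := by
  classical
  let f : φ.freeVarFinset → α ⊕ φ.freeVarFinset.toRight
    | ⟨Sum.inl a, _⟩ => Sum.inl a
    | ⟨Sum.inr b, hb⟩ => Sum.inr ⟨b, Finset.mem_toRight.2 hb⟩
  refine ⟨_, φ.restrictFreeVar f, fun v x => ?_⟩
  refine (BoundedFormula.realize_restrictFreeVar _ ?_).symm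
  rintro ⟨i | i, _⟩ <;> rfl

/-- The Tarski–Vaught property of an elementary substructure, for formulas in arbitrarily many
variables. -/
theorem _root_.FirstOrder.Language.ElementarySubstructure.exists_realize_of_realize
    (N : L.ElementarySubstructure M) {B : Type*} (φ : L.Formula ((N : Set M) ⊕ B)) (w : B → M)
    (hφ : φ.Realize (Sum.elim Subtype.val w)) :
    ∃ g : B → (N : Set M), φ.Realize (Sum.elim Subtype.val (Subtype.val ∘ g)) := by
  classical
  obtain ⟨s, ψ, hψ⟩ := φ.exists_finset_realize_iff (M := M)
  have hM : (ψ.iExs s).Realize (Subtype.val : ↥(N : Set M) → M) :=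
    Formula.realize_iExs.2 ⟨_, (hψ _ w).1 hφ⟩
  obtain ⟨i, hi⟩ := Formula.realize_iExs.1 <|
    (N.subtype.map_formula (ψ.iExs s) (fun n => ⟨n.1, n.2⟩)).1 hM
  rcases isEmpty_or_nonempty B with hB | ⟨⟨b₀⟩⟩
  · refine ⟨isEmptyElim, (hψ _ _).2 ?_⟩
    convert (hψ _ w).1 hφ using 3
  have : Nonempty M := ⟨w b₀⟩
  let n₀ : N := Classical.arbitrary N
  let g : B → (N : Set M) := fun b =>
    if hb : b ∈ s then ⟨i ⟨b, hb⟩, (i ⟨b, hb⟩).2⟩ else ⟨n₀, n₀.2⟩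
  refine ⟨g, (hψ _ _).2 ?_⟩
  convert (N.subtype.map_formula ψ _).2 hi using 2
  funext x
  rcases x with n | ⟨b, hb⟩
  · rfl
  · simp [g, hb]

theorem Saturated.le_mk [Infinite M] {κ : Cardinal.{u}} (hκ : 1 < κ) (hsat : Saturated L M κ) :
    κ ≤ #M := by
  classical
  by_contra! hM
  let neq : M → L.Formula (M ⊕ PUnit.{u + 1}) := fun m =>
    ((Term.var (Sum.inl m)).equal (Term.var (Sum.inr PUnit.unit))).not
  have hneq : ∀ m (x : PUnit.{u + 1} → M), (neq m).Realize (Sum.elim id x) ↔ m ≠ x PUnit.unit :=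
    fun m x => by simp [neq]
  obtain ⟨x, hx⟩ := hsat M PUnit hM (by simpa using hκ) id (Set.range neq) fun s hs => by
    obtain ⟨t, -, rfl⟩ := Finset.subset_set_image_iff.1 (Set.image_univ ▸ hs)
    obtain ⟨y, hy⟩ := Infinite.exists_notMem_finset t
    refine ⟨fun _ => y, ?_⟩
    simp only [Finset.mem_image, forall_exists_index, and_imp, forall_apply_eq_imp_iff₂, hneq]
    exact fun m hm h => hy (h ▸ hm)
  exact (hneq _ x).1 (hx _ ⟨x PUnit.unit, rfl⟩) rfl

theorem aleph0_le_cardT : ℵ₀ ≤ cardT L := le_add_self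

theorem card_le_cardT : L.card ≤ cardT L := le_self_add

theorem Monster.cardT_lt {κbar : Cardinal.{u}} (mon : Monster L M κbar) : cardT L < κbar :=
  Cardinal.add_lt_of_lt mon.aleph0_lt.le mon.lang_lt mon.aleph0_lt

theorem Monster.exists_elementarySubstructure {κbar : Cardinal.{u}} (mon : Monster L M κbar)
    {α : Type u} (hα : #α < κbar) (a : α → M) :
    ∃ N : L.ElementarySubstructure M, Set.range a ⊆ N ∧ #(N : Set M) ≤ #α + cardT L := by
  have hℵ : ℵ₀ ≤ #α + cardT L := le_add_left aleph0_le_cardT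
  rcases finite_or_infinite M with hfin | hinf
  · refine ⟨⊤, by simp, ?_⟩
    simpa using (Cardinal.lt_aleph0_of_finite M).le.trans hℵ
  have hM : #α + cardT L ≤ #M :=
    (Cardinal.add_lt_of_lt mon.aleph0_lt.le hα mon.cardT_lt).le.trans
      (mon.saturated.le_mk (Cardinal.one_lt_aleph0.trans mon.aleph0_lt))
  obtain ⟨N, hN, hcard⟩ := exists_elementarySubstructure_card_eq L (Set.range a) (#α + cardT L)
    hℵ (by simpa using Cardinal.mk_range_le.trans le_self_add)
    (by simpa using le_add_left card_le_cardT) (by simpa using hM)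
  exact ⟨N, hN, by simpa using hcard.le⟩

theorem mk_formula_le {γ : Type u} {c : Cardinal.{u}} (hc : ℵ₀ ≤ c) (hγ : #γ ≤ c)
    (hL : L.card ≤ c) : #(L.Formula γ) ≤ c := by
  have hinj : Function.Injective fun φ : L.Formula γ => (⟨0, φ⟩ : Σ n, L.BoundedFormula γ n) :=
    fun φ ψ h => by simpa using h
  refine (Cardinal.mk_le_of_injective hinj).trans
    (BoundedFormula.card_le.trans (max_le hc ?_))
  simpa using Cardinal.add_le_of_le hc hγ hL

end FirstOrderFacts

open Language

/-- The average type `Av(U/e)` of an ultrafilter `U` on `B`-tuples from `A`. -/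
def avType {A : Set M} {B : Type w} (U : Ultrafilter (B → A)) {γ : Type v} (e : γ → M) :
    Set (L.Formula (γ ⊕ B)) :=
  {φ | {g | φ.Realize (Sum.elim e (Subtype.val ∘ g))} ∈ U}

def RealizesAv {A : Set M} {B : Type w} (U : Ultrafilter (B → A)) {γ : Type v} (e : γ → M)
    (x : B → M) : Prop :=
  ∀ φ ∈ avType L U e, φ.Realize (Sum.elim e x)

section AverageType

variable {L} {A : Set M} {B : Type w} {U : Ultrafilter (B → A)} {γ : Type v}

theorem not_mem_avType (e : γ → M) (φ : L.Formula (γ ⊕ B)) :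
    φ.not ∈ avType L U e ↔ φ ∉ avType L U e := by
  simp only [avType, Set.mem_ofPred_eq, Formula.realize_not, ← Ultrafilter.compl_mem_iff_notMem]
  rfl

theorem mem_avType_comp {γ' : Type*} (e : γ → M) (h : γ' → γ) (φ : L.Formula (γ' ⊕ B)) :
    φ ∈ avType L U (e ∘ h) ↔ φ.relabel (Sum.map h id) ∈ avType L U e := by
  simp only [avType, Set.mem_ofPred_eq, Formula.realize_relabel, Sum.elim_comp_map,
    Function.comp_id]

/-- Each `U`-almost-everywhere condition is about a tuple from `A`, which can serve as
parameters. -/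
theorem avType_congr {e e' : γ → M} (hee : SameTypeOver L M A e e') :
    avType L U e = avType L U e' := by
  ext φ
  suffices ∀ g : B → A, φ.Realize (Sum.elim e (Subtype.val ∘ g)) ↔
      φ.Realize (Sum.elim e' (Subtype.val ∘ g)) by
    simp only [avType, Set.mem_ofPred_eq, this]
  intro g
  simpa [Formula.realize_relabel, Sum.comp_elim, ← Function.comp_assoc] using
    hee (φ.relabel (Sum.elim Sum.inr (Sum.inl ∘ g)))

theorem RealizesAv.comp {γ' : Type*} {e : γ → M} {x : B → M} (hx : RealizesAv L U e x)
    (h : γ' → γ) : RealizesAv L U (e ∘ h) x := fun φ hφ => by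
  simpa [Formula.realize_relabel, Sum.elim_comp_map] using
    hx _ ((mem_avType_comp e h φ).1 hφ)

theorem RealizesAv.realize_iff {e : γ → M} {x : B → M} (hx : RealizesAv L U e x)
    (φ : L.Formula (γ ⊕ B)) : φ.Realize (Sum.elim e x) ↔ φ ∈ avType L U e :=
  ⟨fun h => by_contra fun hφ => hx φ.not ((not_mem_avType e φ).2 hφ) h, hx φ⟩

theorem RealizesAv.sameTypeOver {d x : B → M}
    (hU : ∀ φ, φ ∈ avType L U (Subtype.val : A → M) ↔ φ.Realize (Sum.elim Subtype.val d))
    (hx : RealizesAv L U (Subtype.val : A → M) x) : SameTypeOver L M A x d :=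
  fun φ => (hx.realize_iff φ).trans (hU φ)

theorem RealizesAv.sameTypeOver_sumElim {y y' x x' : B → M}
    (hx : RealizesAv L U (Sum.elim (Subtype.val : A → M) y) x)
    (hx' : RealizesAv L U (Sum.elim (Subtype.val : A → M) y') x') (hy : SameTypeOver L M A y y') :
    SameTypeOver L M A (Sum.elim y x) (Sum.elim y' x') := by
  intro φ
  have hassoc : ∀ z w : B → M, φ.Realize (Sum.elim Subtype.val (Sum.elim z w)) ↔
      (φ.relabel (Equiv.sumAssoc A B B).symm).Realize (Sum.elim (Sum.elim Subtype.val z) w) := by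
    intro z w
    rw [Formula.realize_relabel]
    congr! 1
    funext i
    rcases i with a | b | b <;> rfl
  rw [hassoc, hassoc, hx.realize_iff, hx'.realize_iff, avType_congr hy.sumElim_val]

end AverageType

section Coheirs

variable {L} {A : Set M} {B : Type u}

/-- `tp(d/N)` is finitely satisfiable in `N`, so the sets of `N`-tuples satisfying its formulas
generate a proper filter. -/
theorem exists_avType_eq (N : L.ElementarySubstructure M) (d : B → M) :
    ∃ U : Ultrafilter (B → (N : Set M)), ∀ φ, φ ∈ avType L U (Subtype.val : ↥(N : Set M) → M) ↔
      φ.Realize (Sum.elim Subtype.val d) := by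
  let D : {φ : L.Formula ((N : Set M) ⊕ B) // φ.Realize (Sum.elim Subtype.val d)} →
      Set (B → (N : Set M)) := fun φ => {g | φ.1.Realize (Sum.elim Subtype.val (Subtype.val ∘ g))}
  have : Nonempty {φ : L.Formula ((N : Set M) ⊕ B) // φ.Realize (Sum.elim Subtype.val d)} :=
    ⟨⟨⊤, by simp⟩⟩
  have hD : Directed (· ≥ ·) fun φ => Filter.principal (D φ) := fun φ ψ =>
    ⟨⟨φ.1 ⊓ ψ.1, by simpa using ⟨φ.2, ψ.2⟩⟩, by
      simp only [ge_iff_le, Filter.principal_mono]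
      exact ⟨fun g hg => by simp_all [D], fun g hg => by simp_all [D]⟩⟩
  have : (⨅ φ, Filter.principal (D φ)).NeBot := Filter.iInf_neBot_of_directed' hD fun φ =>
    Filter.principal_neBot_iff.2 (N.exists_realize_of_realize φ.1 d φ.2)
  let U := Ultrafilter.of (⨅ φ, Filter.principal (D φ))
  have hU : ∀ φ, φ.Realize (Sum.elim Subtype.val d) → φ ∈ avType L U Subtype.val := fun φ hφ =>
    Ultrafilter.of_le _ (Filter.mem_iInf_of_mem ⟨φ, hφ⟩ (Filter.mem_principal_self _))
  refine ⟨U, fun φ => ⟨fun h => by_contra fun hφ => ?_, hU φ⟩⟩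
  exact (not_mem_avType _ φ).1 (hU φ.not (by simpa using hφ)) h

theorem exists_realizesAv {κ : Cardinal.{u}} (hsat : Saturated L M κ) {γ : Type u} (hγ : #γ < κ)
    (hB : #B < κ) (U : Ultrafilter (B → A)) (e : γ → M) : ∃ x, RealizesAv L U e x :=
  hsat γ B hγ hB e _ fun s hs => by
    obtain ⟨g, hg⟩ := U.nonempty_of_mem ((Filter.biInter_finset_mem s).2 fun φ hφ => hs hφ)
    exact ⟨Subtype.val ∘ g, by simpa using hg⟩

theorem exists_seq_of_forall_exists {X : Type*} {P : ∀ n, (Fin n → X) → X → Prop}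
    (h : ∀ n f, ∃ x, P n f x) : ∃ c : ℕ → X, ∀ n, P n (fun i => c i) (c n) := by
  choose next hnext using h
  refine ⟨fun n => Nat.strongRec (fun n ih => next n fun i => ih i i.2) n, fun n => ?_⟩
  dsimp only
  rw [Nat.strongRec_eq]
  exact hnext _ _

theorem exists_realizesAv_seq {κ : Cardinal.{u}} (hsat : Saturated L M κ) (hℵ : ℵ₀ < κ)
    {γ : Type u} (hγ : #γ < κ) (hB : #B < κ) (U : Ultrafilter (B → A)) (e : γ → M) :
    ∃ c : ℕ → B → M, ∀ n, RealizesAv L U e (c n) ∧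
      ∀ k < n, RealizesAv L U (Sum.elim e (c k)) (c n) := by
  obtain ⟨c, hc⟩ := exists_seq_of_forall_exists fun n (f : Fin n → B → M) =>
    exists_realizesAv hsat (γ := γ ⊕ (Fin n × B))
      (by simpa using Cardinal.add_lt_of_lt hℵ.le hγ (Cardinal.mul_lt_of_lt hℵ.le
        (Cardinal.natCast_lt_aleph0.trans hℵ) hB)) hB U (Sum.elim e fun p => f p.1 p.2)
  refine ⟨c, fun n => ⟨by simpa using (hc n).comp Sum.inl, fun k hk => ?_⟩⟩
  convert (hc n).comp (Sum.map id fun b => ((⟨k, hk⟩ : Fin n), b)) using 1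
  funext i
  rcases i with _ | _ <;> rfl

theorem pairwise_sameTypeOver_of_realizesAv {U : Ultrafilter (B → A)} {d : ℕ → B → M}
    (hreal : ∀ i m, i ≤ m → RealizesAv L U (Sum.elim (Subtype.val : A → M) (d i)) (d (m + 1)))
    (htype : ∀ i, SameTypeOver L M A (d i) (d 0)) (i j : ℕ) (hij : i < j) :
    SameTypeOver L M A (Sum.elim (d i) (d j)) (Sum.elim (d 0) (d 1)) := by
  obtain ⟨m, rfl⟩ : ∃ m, j = m + 1 := ⟨j - 1, by omega⟩
  exact (hreal i m (by omega)).sameTypeOver_sumElim (hreal 0 0 le_rfl) (htype i)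

end Coheirs

section Stretching

variable {L} {A : Set M} {B : Type u}

theorem _root_.Finset.exists_rank {ι : Type*} [LinearOrder ι] (I : Finset ι) :
    ∃ f : ι → ℕ, ∀ k ∈ I, ∀ l, k < l → f k < f l := by
  classical
  refine ⟨fun k => (I.filter (· < k)).card, fun k hk l hkl => Finset.card_lt_card ?_⟩
  refine (Finset.ssubset_iff_of_subset fun x hx => ?_).2 ⟨k, by simp [hk, hkl], by simp⟩
  simp only [Finset.mem_filter] at hx ⊢
  exact ⟨hx.1, hx.2.trans hkl⟩

theorem exists_pairwise_sameTypeOver {κ : Cardinal.{u}} (hsat : Saturated L M κ) (hℵ : ℵ₀ ≤ κ)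
    (hA : #A < κ) (hB : #B < κ) {ι : Type u} [LinearOrder ι] (hι : #ι < κ) {d : ℕ → B → M}
    (hd : ∀ i j, i < j → SameTypeOver L M A (Sum.elim (d i) (d j)) (Sum.elim (d 0) (d 1))) :
    ∃ e : ι → B → M, ∀ k l, k < l →
      SameTypeOver L M A (Sum.elim (e k) (e l)) (Sum.elim (d 0) (d 1)) := by
  classical
  let pair (k l : ι) (φ : L.Formula (A ⊕ (B ⊕ B))) : L.Formula (A ⊕ (ι × B)) :=
    φ.relabel (Sum.map id (Sum.elim (Prod.mk k) (Prod.mk l)))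
  have hpair : ∀ k l φ (x : ι × B → M), (pair k l φ).Realize (Sum.elim Subtype.val x) ↔
      φ.Realize (Sum.elim Subtype.val (Sum.elim (fun b => x (k, b)) (fun b => x (l, b)))) := by
    intro k l φ x
    simp only [pair, Formula.realize_relabel, Sum.elim_comp_map, Function.comp_id, Sum.comp_elim]
    rfl
  let p := {ψ | ∃ k l, k < l ∧ ∃ φ, φ.Realize (Sum.elim Subtype.val (Sum.elim (d 0) (d 1))) ∧
    ψ = pair k l φ}
  obtain ⟨x, hx⟩ := hsat A (ι × B) hA (by simpa using Cardinal.mul_lt_of_lt hℵ hι hB)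
      Subtype.val p fun s hs => by
    choose k l hkl φ hφ hψ using fun ψ : s => hs ψ.2
    obtain ⟨f, hf⟩ := (Finset.univ.image k).exists_rank
    refine ⟨fun q => d (f q.1) q.2, fun ψ hψs => ?_⟩
    rw [show ψ = _ from hψ ⟨ψ, hψs⟩, hpair]
    exact (hd _ _ (hf _ (Finset.mem_image_of_mem _ (Finset.mem_univ _)) _ (hkl _)) _).2 (hφ _)
  refine ⟨fun k b => x (k, b), fun k l hkl => SameTypeOver.symm ?_⟩
  exact realize_iff_of_forall_realize_imp fun φ hφ =>
    (hpair k l φ x).1 (hx _ ⟨k, l, hkl, φ, hφ, rfl⟩)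

end Stretching

section Boundedness

variable {L}

theorem BddU.exists_bound {κ : Cardinal.{u}} {X : Set (M ≃[L] M)} {β : Type u} {F : IER L M β}
    {b : β → M} (h : BddU L M κ X F b) :
    ∃ μ < κ, ∀ {ι : Type u} (σ : ι → M ≃[L] M), (∀ k, σ k ∈ X) →
      Pairwise (fun k l => ¬F.rel (σ k ∘ b) (σ l ∘ b)) → #ι ≤ μ := by
  obtain ⟨S, hS, hσ⟩ := h
  refine ⟨#S, hS, fun σ hX hF => ?_⟩
  choose s hs hrel using fun k => hσ (σ k) (hX k)
  refine Cardinal.mk_le_of_injective (f := fun k => (⟨s k, hs k⟩ : S)) fun k l hkl => ?_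
  by_contra hne
  have hs' : s k = s l := congrArg Subtype.val hkl
  exact hF hne (F.equiv.trans (hrel k) (hs' ▸ F.equiv.symm (hrel l)))

theorem BddU.of_rel {κ : Cardinal.{u}} {X : Set (M ≃[L] M)} {β : Type u} {F : IER L M β}
    {b b' : β → M} (hB : BddU L M κ X F b) (h : F.rel b b') : BddU L M κ X F b' := by
  obtain ⟨S, hS, hσ⟩ := hB
  refine ⟨S, hS, fun σ hX => ?_⟩
  obtain ⟨t, ht, hrel⟩ := hσ σ hX
  have hσrel : F.rel (⇑σ ∘ b) (⇑σ ∘ b') := (F.invariant _ _ _ _ fun φ => by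
    rw [← Sum.comp_elim, StrongHomClass.realize_formula]).1 h
  exact ⟨t, ht, F.equiv.trans (F.equiv.symm hσrel) hrel⟩

/-- Otherwise stretch `d` to length `μ⁺`, where `μ` bounds the number of conjugates of `b_F`,
and move `b` onto each term by an automorphism fixing `A`: the images are pairwise
`F`-inequivalent. -/
theorem rel_of_pairwise_sameTypeOver {κbar : Cardinal.{u}} (mon : Monster L M κbar)
    {α : Type u} {E : IER L M α} {a : α → M} {A : Set M} (hA : Set.range a ⊆ A)
    (hAκ : #A < κbar) {B : Type u} (hB : #B < κbar) {F : IER L M B} {b : B → M}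
    (hbdd : BddU L M κbar (autU L M E a) F b) {d : ℕ → B → M} (hb : SameTypeOver L M A b (d 0))
    (hd : ∀ i j, i < j → SameTypeOver L M A (Sum.elim (d i) (d j)) (Sum.elim (d 0) (d 1))) :
    F.rel (d 0) (d 1) := by
  by_contra hF
  obtain ⟨μ, hμ, hbound⟩ := hbdd.exists_bound
  let ι := (Order.succ μ).ord.ToType
  have hι : #ι = Order.succ μ := Cardinal.mk_ord_toType _
  have hικ : #(WithTop ι) < κbar := by
    rw [show #(WithTop ι) = #ι + 1 from Cardinal.mk_option, hι]
    exact Cardinal.add_lt_of_lt mon.aleph0_lt.le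
      ((Order.succ_le_of_lt (Cardinal.cantor μ)).trans_lt (mon.strongLimit μ hμ))
      (Cardinal.one_lt_aleph0.trans mon.aleph0_lt)
  -- the top element only serves to pin down the type of each `e k` over `A`
  obtain ⟨e, he⟩ := exists_pairwise_sameTypeOver mon.saturated mon.aleph0_lt.le hAκ hB hικ hd
  have he_type : ∀ k : ι, SameTypeOver L M A b (e k) := fun k =>
    hb.trans ((he k ⊤ (WithTop.coe_lt_top k)).comp Sum.inl : SameTypeOver L M A (e k) (d 0)).symm
  choose σ hσ using fun k : ι => mon.homog _ _ _
    (by simpa using Cardinal.add_lt_of_lt mon.aleph0_lt.le hAκ hB) (he_type k)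
  have hσa : ∀ k, σ k ∈ autU L M E a := fun k => by
    have : ⇑(σ k) ∘ a = a := funext fun i => hσ k (Sum.inl ⟨a i, hA ⟨i, rfl⟩⟩)
    simpa [autU, this] using E.equiv.refl a
  have hσb : ∀ k, ⇑(σ k) ∘ b = e k := fun k => funext fun x => hσ k (Sum.inr x)
  have hpw : Pairwise fun k l => ¬F.rel (⇑(σ k) ∘ b) (⇑(σ l) ∘ b) := by
    have hlt : ∀ k l : ι, k < l → ¬F.rel (e k) (e l) := fun k l hkl hrel =>
      hF ((F.invariant _ _ _ _ (he k l (WithTop.coe_lt_coe.2 hkl)).sameType).1 hrel)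
    intro k l hkl
    rw [hσb, hσb]
    rcases hkl.lt_or_gt with h | h
    · exact hlt k l h
    · exact fun hrel => hlt l k h (F.equiv.symm hrel)
  exact (Order.lt_succ μ).not_ge (hι ▸ hbound σ hσa hpw)

/-- `b` and `b'` are both `F`-equivalent to the first term of a Morley sequence `c` in a coheir of
`tp(b/N)`, since `b, c₀, c₁, …` and `b', c₀, c₁, …` have constant pair types over `N`. -/
theorem rel_of_sameTypeOver {κbar : Cardinal.{u}} (mon : Monster L M κbar) {α : Type u}
    {E : IER L M α} {a : α → M} (N : L.ElementarySubstructure M) (hN : Set.range a ⊆ N)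
    (hNκ : #(N : Set M) < κbar) {B : Type u} (hB : #B < κbar) {F : IER L M B} {b b' : B → M}
    (hbdd : BddU L M κbar (autU L M E a) F b) (h : SameTypeOver L M N b b') : F.rel b b' := by
  obtain ⟨U, hU⟩ := exists_avType_eq N b
  have hκ : #((N : Set M) ⊕ (B ⊕ B)) < κbar := by
    simpa using Cardinal.add_lt_of_lt mon.aleph0_lt.le hNκ
      (Cardinal.add_lt_of_lt mon.aleph0_lt.le hB hB)
  obtain ⟨c, hc⟩ := exists_realizesAv_seq mon.saturated mon.aleph0_lt hκ hB U
    (Sum.elim Subtype.val (Sum.elim b b'))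
  have hc_type : ∀ k, SameTypeOver L M N (c k) b := fun k =>
    ((hc k).1.comp Sum.inl).sameTypeOver hU
  have hc_rel : ∀ y, SameTypeOver L M N b y →
      (∀ n, RealizesAv L U (Sum.elim (Subtype.val : ↥(N : Set M) → M) y) (c n)) →
        F.rel y (c 0) := by
    intro y hy hyc
    refine rel_of_pairwise_sameTypeOver mon hN hNκ hB hbdd (d := fun n => Nat.casesOn n y c) hy
      (pairwise_sameTypeOver_of_realizesAv (U := U) (fun i m him => ?_) fun i => ?_)
    · cases i with
      | zero => exact hyc m
      | succ k =>
        simpa [Sum.elim_comp_map] using ((hc m).2 k (by omega)).comp (Sum.map Sum.inl id)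
    · cases i with
      | zero => exact fun φ => Iff.rfl
      | succ k => exact (hc_type k).trans hy
  have hcb : ∀ n, RealizesAv L U (Sum.elim (Subtype.val : ↥(N : Set M) → M) b) (c n) :=
    fun n => by simpa [Sum.elim_comp_map] using (hc n).1.comp (Sum.map id Sum.inl)
  have hcb' : ∀ n, RealizesAv L U (Sum.elim (Subtype.val : ↥(N : Set M) → M) b') (c n) :=
    fun n => by simpa [Sum.elim_comp_map] using (hc n).1.comp (Sum.map id Sum.inr)
  exact F.equiv.trans (hc_rel b (fun φ => Iff.rfl) hcb) (F.equiv.symm (hc_rel b' h hcb'))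

end Boundedness

def tp {γ : Type v} (x : γ → M) : Set (L.Formula γ) := {φ | φ.Realize x}

def IER.pairTypes {β : Type u} (F : IER L M β) : Set (Set (L.Formula (β ⊕ β))) :=
  {tp L (Sum.elim x y) | (x) (y) (_ : F.rel x y)}

/-- `bddᵘ_λ(a_E)` for `X = Aut(𝕄/a_E)`, with the arities realized as subsets of `K`. -/
def bddUSet (κ : Cardinal.{u}) (X : Set (M ≃[L] M)) (K : Type u) :
    Set (Σ s : Set K, Σ F : IER L M s, Quotient F.setoid) :=
  {x | ∃ dd : x.1 → M, x.2.2 = Quotient.mk x.2.1.setoid dd ∧ BddU L M κ X x.2.1 dd}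

def ultraimaginaryCode (A : Set M) {K : Type u}
    (x : Σ s : Set K, Σ F : IER L M s, Quotient F.setoid) :
    Σ s : Set K, Set (Set (L.Formula (s ⊕ s))) × Set (L.Formula (A ⊕ s)) :=
  ⟨x.1, x.2.1.pairTypes, tp L (Sum.elim (Subtype.val : A → M) x.2.2.out)⟩

section Counting

variable {L}

theorem IER.rel_iff_tp_mem_pairTypes {β : Type u} (F : IER L M β) (x y : β → M) :
    F.rel x y ↔ tp L (Sum.elim x y) ∈ F.pairTypes :=
  ⟨fun h => ⟨x, y, h, rfl⟩, fun ⟨x', y', h, htp⟩ =>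
    (F.invariant x' y' x y fun φ => Set.ext_iff.1 htp φ).1 h⟩

theorem IER.eq_of_pairTypes_eq {β : Type u} {F F' : IER L M β} (h : F.pairTypes = F'.pairTypes) :
    F = F' := by
  have hrel : F.rel = F'.rel := by
    funext x y
    rw [F.rel_iff_tp_mem_pairTypes, F'.rel_iff_tp_mem_pairTypes, h]
  cases F
  cases F'
  cases hrel
  rfl

theorem injOn_ultraimaginaryCode {κbar : Cardinal.{u}} (mon : Monster L M κbar) {α : Type u}
    {E : IER L M α} {a : α → M} (N : L.ElementarySubstructure M) (hN : Set.range a ⊆ N)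
    (hNκ : #(N : Set M) < κbar) {K : Type u} (hK : #K < κbar) :
    Set.InjOn (ultraimaginaryCode L (N : Set M)) (bddUSet L κbar (autU L M E a) K) := by
  rintro ⟨s, F, q⟩ ⟨dd, hq, hbdd⟩ ⟨s', F', q'⟩ - hcode
  obtain ⟨rfl, hcode⟩ := Sigma.mk.inj_iff.1 hcode
  obtain ⟨hF, htp⟩ := Prod.mk.inj (eq_of_heq hcode)
  obtain rfl := IER.eq_of_pairTypes_eq hF
  have hout := rel_of_sameTypeOver mon N hN hNκ ((Cardinal.mk_set_le s).trans_lt hK)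
    (hbdd.of_rel (F.equiv.symm (Quotient.exact ((Quotient.out_eq q).trans hq))))
    fun φ => Set.ext_iff.1 htp φ
  rw [(Quotient.out_equiv_out (s := F.setoid)).1 hout]

theorem mk_ultraimaginaryCode_le {K P : Type u} {ρ : Cardinal.{u}} (hP : #P ≤ ρ + cardT L) :
    #(Σ s : Set K, Set (Set (L.Formula (s ⊕ s))) × Set (L.Formula (P ⊕ s))) ≤
      2 ^ (ρ + 2 ^ (#K + cardT L)) := by
  set t := #K + cardT L
  set θ := ρ + 2 ^ t
  have ht : ℵ₀ ≤ t := le_add_left aleph0_le_cardT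
  have htθ : t ≤ θ := (Cardinal.cantor t).le.trans le_add_self
  have hθ : ℵ₀ ≤ θ := ht.trans htθ
  have hLt : L.card ≤ t := card_le_cardT.trans le_add_self
  have hs : ∀ s : Set K, #s ≤ t := fun s => (Cardinal.mk_set_le s).trans le_self_add
  have hpair : ∀ s : Set K, #(L.Formula (s ⊕ s)) ≤ t := fun s =>
    mk_formula_le ht (by simpa using Cardinal.add_le_of_le ht (hs s) (hs s)) hLt
  have hpar : ∀ s : Set K, #(L.Formula (P ⊕ s)) ≤ θ := fun s => by
    refine mk_formula_le hθ ?_ (hLt.trans htθ)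
    simpa using Cardinal.add_le_of_le hθ
      (hP.trans (add_le_add le_rfl ((le_add_left le_rfl).trans (Cardinal.cantor t).le)))
      ((hs s).trans htθ)
  have hfiber : ∀ s : Set K,
      #(Set (Set (L.Formula (s ⊕ s))) × Set (L.Formula (P ⊕ s))) ≤ 2 ^ θ := fun s => by
    rw [Cardinal.mk_prod, Cardinal.lift_id, Cardinal.lift_id, Cardinal.mk_set, Cardinal.mk_set,
      Cardinal.mk_set, ← Cardinal.power_add]
    exact Cardinal.power_le_power_left two_ne_zero (Cardinal.add_le_of_le hθ
      ((Cardinal.power_le_power_left two_ne_zero (hpair s)).trans le_add_self) (hpar s))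
  calc _ = Cardinal.sum fun s : Set K =>
        #(Set (Set (L.Formula (s ⊕ s))) × Set (L.Formula (P ⊕ s))) := Cardinal.mk_sigma _
    _ ≤ Cardinal.sum fun _ : Set K => 2 ^ θ := Cardinal.sum_le_sum _ _ hfiber
    _ = 2 ^ (#K + θ) := by rw [Cardinal.sum_const', Cardinal.mk_set, ← Cardinal.power_add]
    _ ≤ 2 ^ θ := Cardinal.power_le_power_left two_ne_zero
      (Cardinal.add_le_of_le hθ (le_self_add.trans htθ) le_rfl)

end Counting

/-- For any ultraimaginary `a_E` and any cardinal `λ`, the set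
`bddᵘ_λ(a_E)` of ultraimaginaries of arity at most `λ` (represented with index
types the subsets of a set `K` of size `λ`) bounded over `a_E` has cardinality at
most `2^(|a| + 2^(λ+|T|))`. -/
theorem statement_2 (L : FirstOrder.Language.{u, u}) (M : Type u) [L.Structure M]
    (κbar : Cardinal.{u}) (_mon : Monster L M κbar)
    {α : Type u} (hα : #α < κbar) (E : IER L M α) (a : α → M)
    (lam : Cardinal.{u}) (hlam : lam < κbar) (K : Type u) (hK : #K = lam) :
    #{x : Σ s : Set K, Σ F : IER L M ↥s, Quotient F.setoid //
        ∃ dd : ↥x.1 → M, x.2.2 = Quotient.mk x.2.1.setoid dd ∧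
          BddU L M κbar (autU L M E a) x.2.1 dd}
      ≤ 2 ^ (#α + 2 ^ (lam + cardT L)) := by
  obtain ⟨N, hN, hNcard⟩ := _mon.exists_elementarySubstructure hα a
  have hNκ : #(N : Set M) < κbar :=
    hNcard.trans_lt (Cardinal.add_lt_of_lt _mon.aleph0_lt.le hα _mon.cardT_lt)
  subst hK
  exact (Cardinal.mk_le_of_injective (Set.injOn_iff_injective.1
    (injOn_ultraimaginaryCode _mon N hN hNκ hlam))).trans (mk_ultraimaginaryCode_le hNcard)

end BddUltra
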